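/- For all nonnegative integers α and β, the half-space integration-by-parts identity I(α+1, β+1) = −He_{α+1}(0)·He_β(0) + (α+1)·I(α,β) holds. -/

import Mathlib

open MeasureTheory Real

/-- The probabilist's Hermite polynomial evaluated at a real number. -/
noncomputable def He (n : ℕ) (x : ℝ) : ℝ := Polynomial.aeval x (Polynomial.hermite n)

/-- The half-space Hermite-Gaussian integral `I(α,β)`. -/
noncomputable def I (a b : ℕ) : ℝ :=
  ∫ x in Set.Iic (0 : ℝ), He a x * He b x * Real.exp (-x ^ 2 / 2)

/-!
Integrate `F = He_{α+1} · (He_β e^{-x²/2})` over `(-∞, 0]`. Since `He_{α+1}' = (α+1) He_α` and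
`(He_β e^{-x²/2})' = -He_{β+1} e^{-x²/2}`, the derivative `F'` is `(α+1) He_α He_β e^{-x²/2}`
minus the integrand of `I(α+1, β+1)`. Both `F` and `F'` are polynomials times a Gaussian, hence
integrable, which forces `F → 0` at `-∞`; the fundamental theorem of calculus gives `F(0)`.
-/

open Polynomial Filter Set Topology

theorem Polynomial.derivative_hermite_succ (n : ℕ) :
    derivative (hermite (n + 1)) = (n + 1 : ℤ[X]) * hermite n := by
  induction n with
  | zero => simp [hermite_zero]
  | succ n ih =>
    rw [hermite_succ (n + 1), derivative_sub, derivative_mul, derivative_X, one_mul, ih,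
      derivative_mul, hermite_succ n]
    simp only [derivative_add, derivative_natCast, derivative_one]
    push_cast
    ring

theorem Polynomial.integrable_eval_mul_exp_neg_mul_sq (p : ℝ[X]) {b : ℝ} (hb : 0 < b) :
    Integrable fun x : ℝ => p.eval x * exp (-b * x ^ 2) := by
  simp_rw [eval_eq_sum_range, Finset.sum_mul, mul_assoc]
  refine integrable_finsetSum _ fun i _ => Integrable.const_mul ?_ _
  simpa only [rpow_natCast] using
    integrable_rpow_mul_exp_neg_mul_sq hb (s := i) (neg_one_lt_zero.trans_le i.cast_nonneg)

theorem integrable_He_mul_He_mul_exp (a b : ℕ) :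
    Integrable fun x : ℝ => He a x * He b x * exp (-x ^ 2 / 2) := by
  convert ((hermite a * hermite b).map (algebraMap ℤ ℝ)).integrable_eval_mul_exp_neg_mul_sq
    (b := 1 / 2) (by norm_num) using 2 with x
  rw [eval_map_algebraMap, map_mul, He, He]
  ring_nf

theorem hasDerivAt_He_succ (n : ℕ) (x : ℝ) :
    HasDerivAt (He (n + 1)) ((n + 1) * He n x) x :=
  ((hermite (n + 1)).hasDerivAt_aeval x).congr_deriv <| by
    rw [derivative_hermite_succ, map_mul]
    simp [He]

theorem hasDerivAt_He_mul_exp (n : ℕ) (x : ℝ) :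
    HasDerivAt (fun y => He n y * exp (-y ^ 2 / 2)) (-(He (n + 1) x * exp (-x ^ 2 / 2))) x := by
  have hexp : HasDerivAt (fun y : ℝ => -y ^ 2 / 2) (-x) x :=
    (((hasDerivAt_pow 2 x).neg).div_const 2).congr_deriv (by ring)
  refine (((hermite n).hasDerivAt_aeval x).mul hexp.exp).congr_deriv ?_
  simp only [He, hermite_succ, map_sub, map_mul, aeval_X]
  ring

theorem I_succ_succ (α β : ℕ) :
    I (α + 1) (β + 1) = -(He (α + 1) 0 * He β 0) + (α + 1) * I α β := by
  have hint := integrable_He_mul_He_mul_exp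
  set F : ℝ → ℝ := fun x => He (α + 1) x * (He β x * exp (-x ^ 2 / 2))
  set F' : ℝ → ℝ := fun x => (α + 1) * (He α x * He β x * exp (-x ^ 2 / 2))
    - He (α + 1) x * He (β + 1) x * exp (-x ^ 2 / 2)
  have hF : ∀ x ∈ Iic (0 : ℝ), HasDerivAt F (F' x) x := fun x _ =>
    ((hasDerivAt_He_succ α x).mul (hasDerivAt_He_mul_exp β x)).congr_deriv (by ring)
  have hF'int : IntegrableOn F' (Iic 0) := (((hint α β).const_mul _).sub (hint _ _)).integrableOn
  have hFint : IntegrableOn F (Iic 0) := by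
    simpa only [F, mul_assoc] using (hint (α + 1) β).integrableOn
  have hlim : Tendsto F atBot (𝓝 0) :=
    tendsto_zero_of_hasDerivAt_of_integrableOn_Iic hF hF'int hFint
  have hFTC := integral_Iic_of_hasDerivAt_of_tendsto' hF hF'int hlim
  rw [integral_sub ((hint α β).const_mul _).integrableOn (hint _ _).integrableOn,
    integral_const_mul] at hFTC
  norm_num [F] at hFTC
  rw [I, I]
  linarith
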